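/- Fix positive reals α_1,…,α_N and ρ_1,…,ρ_N, and define Q_ρ = R⁻¹(HR − μ hhᵀ)R⁻¹ with R = diag(ρ), H = diag(α), h = (α_1,…,α_N)ᵀ, μ = (Σ_{i=1}^N α_i/ρ_i)⁻¹. Then Q_ρ is positive semidefinite, Q_ρ𝟙 = 0, and zᵀQ_ρ z = 0 holds only if all components of z are equal; that is, the kernel of Q_ρ is exactly span{𝟙}. -/

import Mathlib

/-!
With `b i = α i / ρ i` and `S = ∑ i, b i`, the matrix `Q_ρ` is `diag b - S⁻¹ b bᵀ`, i.e. `S⁻¹` times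
the Laplacian of the complete graph with edge weights `b i * b j`. Its quadratic form is therefore
`(2S)⁻¹ ∑ i j, b i b j (z i - z j)²` (a weighted Lagrange identity), which is nonnegative and, the
weights being positive, vanishes only on constant vectors.
-/

open Matrix

/-- `Q_ρ = R⁻¹ (H R − μ h hᵀ) R⁻¹` with `R = diag(ρ)`, `H = diag(α)`,
`h = α` and `μ = (∑ i, α i / ρ i)⁻¹`. -/
noncomputable def Qrho {N : ℕ} (α ρ : Fin N → ℝ) : Matrix (Fin N) (Fin N) ℝ :=
  Matrix.diagonal (fun i => (ρ i)⁻¹) *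
    (Matrix.diagonal α * Matrix.diagonal ρ
      - (∑ i, α i / ρ i)⁻¹ • Matrix.vecMulVec α α) *
    Matrix.diagonal (fun i => (ρ i)⁻¹)

open Finset

lemma sum_sum_mul_mul_sub_sq {ι R : Type*} [Fintype ι] [CommRing R] (b z : ι → R) :
    ∑ i, ∑ j, b i * b j * (z i - z j) ^ 2
      = 2 * ((∑ i, b i) * ∑ i, b i * z i ^ 2 - (∑ i, b i * z i) ^ 2) := by
  have expand : ∀ i j, b i * b j * (z i - z j) ^ 2
      = b i * z i ^ 2 * b j - 2 * (b i * z i * (b j * z j)) + b i * (b j * z j ^ 2) :=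
    fun i j => by ring
  simp_rw [expand, sum_add_distrib, sum_sub_distrib, ← mul_sum, ← sum_mul]
  ring

section VarianceForm

variable {ι : Type*} [Fintype ι] [DecidableEq ι]

/-- `z ⬝ᵥ (varianceForm b *ᵥ z)` is `∑ b` times the variance of `z` under the weights `b / ∑ b`. -/
noncomputable def varianceForm (b : ι → ℝ) : Matrix ι ι ℝ :=
  diagonal b - (∑ i, b i)⁻¹ • vecMulVec b b

lemma varianceForm_isHermitian (b : ι → ℝ) : (varianceForm b).IsHermitian := by
  have hbb : (vecMulVec b b).IsHermitian := by
    simpa using (posSemidef_vecMulVec_self_star b).isHermitian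
  exact (isHermitian_diagonal b).sub (hbb.smul (IsSelfAdjoint.all _))

lemma varianceForm_mulVec (b z : ι → ℝ) :
    varianceForm b *ᵥ z = fun i => b i * z i - (∑ j, b j)⁻¹ * (∑ j, b j * z j) * b i := by
  ext i
  simp [varianceForm, sub_mulVec, smul_mulVec, mulVec_diagonal, vecMulVec_mulVec, dotProduct]
  ring

lemma varianceForm_mulVec_const {b : ι → ℝ} (hb : ∀ i, 0 < b i) (c : ℝ) :
    varianceForm b *ᵥ (fun _ => c) = 0 := by
  ext i
  have hS : 0 < ∑ j, b j := sum_pos (fun j _ => hb j) ⟨i, mem_univ i⟩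
  simp only [varianceForm_mulVec, ← sum_mul, Pi.zero_apply]
  field_simp
  ring

lemma dotProduct_varianceForm_mulVec (b z : ι → ℝ) :
    z ⬝ᵥ (varianceForm b *ᵥ z)
      = ∑ i, b i * z i ^ 2 - (∑ i, b i)⁻¹ * (∑ i, b i * z i) ^ 2 := by
  simp only [varianceForm_mulVec, dotProduct, mul_sub, sum_sub_distrib]
  congr 1
  · exact sum_congr rfl fun i _ => by ring
  · simp_rw [mul_comm (z _), mul_assoc, ← mul_sum]
    ring

lemma varianceForm_posSemidef {b : ι → ℝ} (hb : ∀ i, 0 ≤ b i) : (varianceForm b).PosSemidef := by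
  refine .of_dotProduct_mulVec_nonneg (varianceForm_isHermitian b) fun z => ?_
  have hbz : ∀ i, 0 ≤ b i * z i ^ 2 := fun i => mul_nonneg (hb i) (sq_nonneg _)
  rw [star_trivial, dotProduct_varianceForm_mulVec, sub_nonneg]
  refine inv_mul_le_of_le_mul₀ (sum_nonneg fun i _ => hb i) (sum_nonneg fun i _ => hbz i) ?_
  exact sum_sq_le_sum_mul_sum_of_sq_le_mul _ (fun i _ => hb i) (fun i _ => hbz i)
    fun i _ => le_of_eq (by ring)

lemma dotProduct_varianceForm_mulVec_eq_sum_sum {b : ι → ℝ} (hS : ∑ i, b i ≠ 0) (z : ι → ℝ) :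
    z ⬝ᵥ (varianceForm b *ᵥ z)
      = (2 * ∑ i, b i)⁻¹ * ∑ i, ∑ j, b i * b j * (z i - z j) ^ 2 := by
  rw [dotProduct_varianceForm_mulVec, sum_sum_mul_mul_sub_sq]
  field_simp

lemma exists_eq_const_of_dotProduct_varianceForm_mulVec_eq_zero {b : ι → ℝ} (hb : ∀ i, 0 < b i)
    {z : ι → ℝ} (hz : z ⬝ᵥ (varianceForm b *ᵥ z) = 0) : ∃ c, ∀ i, z i = c := by
  rcases isEmpty_or_nonempty ι with _ | ⟨⟨i₀⟩⟩
  · exact ⟨0, isEmptyElim⟩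
  have hS : 0 < ∑ i, b i := sum_pos (fun i _ => hb i) ⟨i₀, mem_univ i₀⟩
  have hterm : ∀ i j, 0 ≤ b i * b j * (z i - z j) ^ 2 := fun i j =>
    mul_nonneg (mul_pos (hb i) (hb j)).le (sq_nonneg _)
  rw [dotProduct_varianceForm_mulVec_eq_sum_sum hS.ne', mul_eq_zero,
    or_iff_right (by positivity)] at hz
  refine ⟨z i₀, fun i => ?_⟩
  have hrow := (sum_eq_zero_iff_of_nonneg fun i _ => sum_nonneg fun j _ => hterm i j).1 hz i
    (mem_univ i)
  have hij := (sum_eq_zero_iff_of_nonneg fun j _ => hterm i j).1 hrow i₀ (mem_univ i₀)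
  simpa [(hb i).ne', (hb i₀).ne', sub_eq_zero] using hij

end VarianceForm

lemma Qrho_eq_varianceForm {N : ℕ} (α ρ : Fin N → ℝ) :
    Qrho α ρ = varianceForm fun i => α i / ρ i := by
  ext i j
  simp only [Qrho, varianceForm, diagonal_mul_diagonal, mul_diagonal, diagonal_mul,
    Matrix.sub_apply, Matrix.smul_apply, vecMulVec_apply, diagonal_apply, smul_eq_mul]
  split_ifs with h
  · subst h
    have hcancel : ρ i * (ρ i)⁻¹ * (ρ i)⁻¹ = (ρ i)⁻¹ := by
      simpa using inv_mul_mul_self (ρ i)⁻¹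
    linear_combination α i * hcancel
  · ring

/-- For positive `α` and `ρ`, the matrix `Q_ρ` is positive semidefinite,
satisfies `Q_ρ 𝟙 = 0`, and `zᵀ Q_ρ z = 0` forces all components of `z` to be
equal; i.e. the kernel of `Q_ρ` is exactly `span{𝟙}`. -/
theorem Qrho_psd_kernel
    {N : ℕ} (α ρ : Fin N → ℝ) (hα : ∀ i, 0 < α i) (hρ : ∀ i, 0 < ρ i) :
    (Qrho α ρ).PosSemidef ∧
      Qrho α ρ *ᵥ (fun _ => (1 : ℝ)) = 0 ∧
      ∀ z : Fin N → ℝ, z ⬝ᵥ (Qrho α ρ *ᵥ z) = 0 → ∃ c : ℝ, ∀ i, z i = c := by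
  have hb : ∀ i, 0 < α i / ρ i := fun i => div_pos (hα i) (hρ i)
  rw [Qrho_eq_varianceForm]
  exact ⟨varianceForm_posSemidef fun i => (hb i).le, varianceForm_mulVec_const hb 1,
    fun _ => exists_eq_const_of_dotProduct_varianceForm_mulVec_eq_zero hb⟩
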